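/- arXiv:2406.10064 — 9 statements merged into one kernel-verified Lean document; each statement's English description precedes it below -/
import Mathlib

section
/- Let L be the 2-dimensional non-abelian Lie algebra over the finite field F_q with basis {x, y} and bracket [x, y] = x. Then the commutativity degree of L equals d(L) = (q² + q − 1)/q³. -/
/-!
In coordinates with respect to a basis `x, y`, the bracket `⁅z, w⁆` is the determinant of the
`2 × 2` matrix with rows the coordinates of `z` and `w`, times `⁅x, y⁆ = x ≠ 0`. So commuting
pairs correspond to singular matrices over `F_q`, of which there are
`q⁴ - |GL₂(F_q)| = q⁴ - (q² - 1)(q² - q) = q³ + q² - q`.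
-/

/-- The commutativity degree of a finite Lie ring `L`:
the probability that two randomly chosen elements commute. -/
noncomputable def commDeg (L : Type*) [LieRing L] : ℚ :=
  (Nat.card {p : L × L // ⁅p.1, p.2⁆ = 0} : ℚ) / (Nat.card L : ℚ) ^ 2

open Matrix

theorem Matrix.card_det_eq_zero_add_card_GL (n F : Type*) [Fintype n] [DecidableEq n] [Field F]
    [Fintype F] :
    Nat.card {A : Matrix n n F // A.det = 0} + Nat.card (GL n F) =
      Fintype.card F ^ (Fintype.card n * Fintype.card n) := by
  classical
  let e : GL n F ≃ {A : Matrix n n F // ¬A.det = 0} :=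
    Equiv.ofBijective (fun g => ⟨g, g.det_ne_zero⟩)
      ⟨fun _ _ h => Units.ext (congrArg Subtype.val h),
        fun A => ⟨GeneralLinearGroup.mkOfDetNeZero A.1 A.2, rfl⟩⟩
  rw [Nat.card_congr e, Nat.card_eq_fintype_card, Nat.card_eq_fintype_card,
    Fintype.card_subtype_compl, Nat.add_sub_of_le (Fintype.card_subtype_le _),
    ← Nat.card_eq_fintype_card]
  simp [Matrix, pow_mul]

namespace Module.Basis

variable {R L : Type*} [CommRing R] [LieRing L] [LieAlgebra R L] (b : Basis (Fin 2) R L)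

theorem lie_eq_det_smul (z w : L) :
    ⁅z, w⁆ = (of ![b.repr z, b.repr w]).det • ⁅b 0, b 1⁆ := by
  conv_lhs => rw [← b.sum_repr z, ← b.sum_repr w]
  simp only [Fin.sum_univ_two, add_lie, lie_add, smul_lie, lie_smul, lie_self, det_fin_two,
    ← lie_skew (b 1) (b 0), of_apply, cons_val_zero, cons_val_one]
  module

noncomputable def pairEquivMatrix : L × L ≃ Matrix (Fin 2) (Fin 2) R :=
  (b.equivFun.toEquiv.prodCongr b.equivFun.toEquiv).trans
    ((piFinTwoEquiv fun _ => Fin 2 → R).symm.trans Matrix.of)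

theorem pairEquivMatrix_apply (p : L × L) :
    b.pairEquivMatrix p = of ![b.repr p.1, b.repr p.2] := rfl

theorem card_commutingPairs_eq_card_det_eq_zero [IsDomain R] (hb : ⁅b 0, b 1⁆ ≠ 0) :
    Nat.card {p : L × L // ⁅p.1, p.2⁆ = 0} =
      Nat.card {A : Matrix (Fin 2) (Fin 2) R // A.det = 0} :=
  Nat.card_congr <| b.pairEquivMatrix.subtypeEquiv fun p => by
    rw [b.lie_eq_det_smul, b.smul_eq_zero, or_iff_left hb, pairEquivMatrix_apply]

end Module.Basis

theorem commDeg_two_dim_nonabelian_general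
    (q : ℕ) (F : Type*) [Field F] [Fintype F] (hF : Fintype.card F = q)
    (L : Type*) [LieRing L] [LieAlgebra F L]
    (b : Module.Basis (Fin 2) F L)
    (hb : ⁅b 0, b 1⁆ = b 0) :
    commDeg L = ((q : ℚ) ^ 2 + q - 1) / (q : ℚ) ^ 3 := by
  have hq : 1 ≤ q := hF ▸ Fintype.card_pos
  have hL : Nat.card L = q ^ 2 := by
    simp [Nat.card_congr b.equivFun.toEquiv, hF]
  have hGL : (Nat.card (GL (Fin 2) F) : ℚ) = (q ^ 2 - 1) * (q ^ 2 - q) := by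
    rw [card_GL_field, Fin.prod_univ_two, hF, Fin.val_zero, Fin.val_one, pow_zero, pow_one]
    push_cast [Nat.cast_sub (Nat.one_le_pow _ _ hq), Nat.cast_sub (Nat.le_self_pow two_ne_zero q)]
    ring
  have hcomm : (Nat.card {p : L × L // ⁅p.1, p.2⁆ = 0} : ℚ) =
      q ^ 4 - (q ^ 2 - 1) * (q ^ 2 - q) := by
    rw [b.card_commutingPairs_eq_card_det_eq_zero (hb.symm ▸ b.ne_zero 0), ← hGL,
      eq_sub_iff_add_eq]
    exact_mod_cast (card_det_eq_zero_add_card_GL (Fin 2) F).trans (by simp [hF])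
  have hq0 : (q : ℚ) ≠ 0 := by positivity
  rw [commDeg, hcomm, hL]
  push_cast
  field_simp
  ring

/-- If `L` is the 2-dimensional non-abelian Lie algebra over the finite
field `F_q`, with basis `{x, y}` and bracket `⁅x, y⁆ = x`, then
`d(L) = (q² + q − 1) / q³`. -/
theorem commDeg_two_dim_nonabelian
    (q : ℕ) (F : Type*) [Field F] [Fintype F] (hF : Fintype.card F = q)
    (L : Type*) [LieRing L] [LieAlgebra F L] [Finite L]
    (b : Module.Basis (Fin 2) F L)
    (hb : ⁅b 0, b 1⁆ = b 0) :
    commDeg L = ((q : ℚ) ^ 2 + q - 1) / (q : ℚ) ^ 3 :=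
  commDeg_two_dim_nonabelian_general q F hF L b hb
end

section
/- Let L_{5,5} and L_{5,7} be the 5-dimensional nilpotent Lie algebras over the finite field F_q with basis {x₁,…,x₅} and nonzero brackets among basis elements given by [x₁,x₂]=x₃, [x₁,x₃]=x₅, [x₂,x₄]=x₅ for L_{5,5}, and [x₁,x₂]=x₃, [x₁,x₃]=x₄, [x₁,x₄]=x₅ for L_{5,7}. Then d(L_{5,5}) = d(L_{5,7}) = (q³ + q² − 1)/q⁵. -/
/-!
Sort a commuting pair `(x, y)` by its leading coordinates `(s, s')` (those of `x₁, x₂` for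
`L₅₅`, of `x₁` for `L₅₇`). The rest of the condition `⁅x, y⁆ = 0` is the vanishing of the
linear map `(u, u') ↦ g_s u' - g_{s'} u` in the remaining coordinates, which is zero for
`s = s' = 0` and onto `W` otherwise. So there are `|U| + (N - 1) |U| / |W|` commuting pairs, `N`
counting the admissible leading pairs: all `q²` of them for `L₅₇` (`W = F³`), and for `L₅₅`
(`W = F`) the `q³ + q² - q` singular `2 × 2` matrices, counted by the same principle.
Either way one gets `q⁸ + q⁷ - q⁵` commuting pairs.
-/

open LinearMap

section KernelCount

variable {K S U W : Type*} [Field K] [AddCommGroup U] [Module K U] [AddCommGroup W] [Module K W]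

theorem LinearMap.card_ker_mul_card_of_surjective (f : U →ₗ[K] W) (hf : Function.Surjective f) :
    Nat.card (ker f) * Nat.card W = Nat.card U := by
  rw [(ker f).card_eq_card_quotient_mul_card,
    Nat.card_congr (f.quotKerEquivOfSurjective hf).toEquiv]

theorem card_pairs_mem_ker [Fintype S] [Finite U] [Finite W] (P : S → Prop) (f : S → U →ₗ[K] W)
    (s₀ : S) (hP₀ : P s₀) (hf₀ : f s₀ = 0) (hf : ∀ s, P s → s ≠ s₀ → Function.Surjective (f s)) :
    (Nat.card {x : S × U // P x.1 ∧ f x.1 x.2 = 0} : ℚ) =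
      Nat.card U + (Nat.card {s // P s} - 1) * Nat.card U / Nat.card W := by
  classical
  let e : {x : S × U // P x.1 ∧ f x.1 x.2 = 0} ≃ Σ s : {s // P s}, ker (f s) :=
    { toFun x := ⟨⟨x.1.1, x.2.1⟩, x.1.2, x.2.2⟩
      invFun y := ⟨(y.1.1, y.2.1), y.1.2, y.2.2⟩
      left_inv _ := rfl
      right_inv _ := rfl }
  have hW : (Nat.card W : ℚ) ≠ 0 := by exact_mod_cast Nat.card_pos.ne'
  have hker : ∀ s ∈ ({⟨s₀, hP₀⟩}ᶜ : Finset {s // P s}),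
      (Nat.card (ker (f s)) : ℚ) = Nat.card U / Nat.card W := fun s hs => by
    rw [eq_div_iff hW, ← Nat.cast_mul, card_ker_mul_card_of_surjective _
      (hf s s.2 fun h => by simp [← h] at hs)]
  rw [Nat.card_congr e, Nat.card_sigma, Nat.cast_sum, Fintype.sum_eq_add_sum_compl ⟨s₀, hP₀⟩,
    Finset.sum_congr rfl hker, Finset.sum_const, Finset.card_compl, Finset.card_singleton,
    nsmul_eq_mul, Nat.cast_sub (Fintype.card_pos_iff.mpr ⟨⟨s₀, hP₀⟩⟩),
    ← Nat.card_eq_fintype_card, hf₀, ker_zero]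
  simp [mul_div_assoc]

end KernelCount

section Coordinates

variable {K V W C : Type*} [Field K] [AddCommGroup V] [Module K V] [AddCommGroup W] [Module K W]
  [AddCommGroup C] [Module K C]

def dot₂ (p : K × K) : K × K →ₗ[K] K :=
  p.1 • fst K K K + p.2 • snd K K K

@[simp]
theorem dot₂_apply (p r : K × K) : dot₂ p r = p.1 * r.1 + p.2 * r.2 := rfl

@[simp]
theorem dot₂_zero : dot₂ (0 : K × K) = 0 := by
  ext <;> simp

theorem dot₂_surjective {p : K × K} (hp : p ≠ 0) : Function.Surjective (dot₂ p) := by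
  intro z
  by_cases h₁ : p.1 = 0
  · have h₂ : p.2 ≠ 0 := fun h₂ => hp (Prod.ext h₁ h₂)
    exact ⟨(0, p.2⁻¹ * z), by simp [h₂]⟩
  · exact ⟨(p.1⁻¹ * z, 0), by simp [h₁]⟩

def crossTerm (g h : V →ₗ[K] W) : (V × C) × (V × C) →ₗ[K] W :=
  g ∘ₗ fst K V C ∘ₗ snd K _ _ - h ∘ₗ fst K V C ∘ₗ fst K _ _

@[simp]
theorem crossTerm_apply (g h : V →ₗ[K] W) (u u' : V × C) :
    crossTerm g h (u, u') = g u'.1 - h u.1 := rfl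

@[simp]
theorem crossTerm_zero : crossTerm (C := C) (0 : V →ₗ[K] W) 0 = 0 := by
  ext <;> simp [crossTerm]

theorem crossTerm_surjective {g h : V →ₗ[K] W}
    (hgh : Function.Surjective g ∨ Function.Surjective h) :
    Function.Surjective (crossTerm (C := C) g h) := by
  intro w
  rcases hgh with hg | hh
  · obtain ⟨v, rfl⟩ := hg w
    exact ⟨((0, 0), (v, 0)), by simp⟩
  · obtain ⟨v, hv⟩ := hh (-w)
    exact ⟨((v, 0), (0, 0)), by simp [hv]⟩

variable [Fintype K]

theorem card_det_two_eq_zero :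
    (Nat.card {x : (K × K) × (K × K) // x.1.1 * x.2.2 - x.1.2 * x.2.1 = 0} : ℚ) =
      Fintype.card K ^ 3 + Fintype.card K ^ 2 - Fintype.card K := by
  have hq : (Fintype.card K : ℚ) ≠ 0 := by exact_mod_cast Fintype.card_ne_zero
  have key := card_pairs_mem_ker (fun _ => True) (fun p : K × K => dot₂ (-p.2, p.1)) 0 trivial
    (by ext <;> simp) fun p _ hp => dot₂_surjective (by simpa [Prod.ext_iff, and_comm] using hp)
  have e : {x : (K × K) × (K × K) // True ∧ dot₂ (-x.1.2, x.1.1) x.2 = 0} ≃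
      {x : (K × K) × (K × K) // x.1.1 * x.2.2 - x.1.2 * x.2.1 = 0} :=
    Equiv.subtypeEquivRight fun x => by
      simp only [true_and, dot₂_apply]
      constructor <;> intro h <;> linear_combination h
  rw [← Nat.card_congr e, key]
  simp only [Nat.card_eq_fintype_card, Fintype.card_prod, Nat.cast_mul, Fintype.card_subtype_true]
  field_simp
  ring

end Coordinates

section LieCoordinates

variable {R L ι : Type*} [CommRing R] [LieRing L] [LieAlgebra R L]

theorem Module.Basis.lie_eq_sum [Fintype ι] (a : Module.Basis ι R L) (x y : L) :
    ⁅x, y⁆ = ∑ i, ∑ j, (a.repr x i * a.repr y j) • ⁅a i, a j⁆ := by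
  conv_lhs => rw [← a.sum_repr x, ← a.sum_repr y]
  simp only [sum_lie, lie_sum, smul_lie, lie_smul, Finset.smul_sum, smul_smul]
  rw [Finset.sum_comm]
  simp only [mul_comm]

theorem card_commuting_congr {A B : Type*} (e : L ≃ A × B) (Q : A × A → B × B → Prop)
    (he : ∀ x y, ⁅x, y⁆ = 0 ↔ Q ((e x).1, (e y).1) ((e x).2, (e y).2)) :
    Nat.card {p : L × L // ⁅p.1, p.2⁆ = 0} = Nat.card {z : (A × A) × (B × B) // Q z.1 z.2} :=
  Nat.card_congr <| ((e.prodCongr e).trans (Equiv.prodProdProdComm _ _ _ _)).subtypeEquiv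
    fun p => he p.1 p.2

end LieCoordinates

section L55

variable {K L : Type*} [Field K] [LieRing L] [LieAlgebra K L] (a : Module.Basis (Fin 5) K L)
    (ha01 : ⁅a 0, a 1⁆ = a 2) (ha02 : ⁅a 0, a 2⁆ = a 4) (ha03 : ⁅a 0, a 3⁆ = 0)
    (ha04 : ⁅a 0, a 4⁆ = 0) (ha12 : ⁅a 1, a 2⁆ = 0) (ha13 : ⁅a 1, a 3⁆ = a 4)
    (ha14 : ⁅a 1, a 4⁆ = 0) (ha23 : ⁅a 2, a 3⁆ = 0) (ha24 : ⁅a 2, a 4⁆ = 0)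
    (ha34 : ⁅a 3, a 4⁆ = 0)
include ha01 ha02 ha03 ha04 ha12 ha13 ha14 ha23 ha24 ha34

theorem lie_eq_zero_iff_L55 (x y : L) :
    ⁅x, y⁆ = 0 ↔ a.repr x 0 * a.repr y 1 - a.repr x 1 * a.repr y 0 = 0 ∧
      a.repr x 0 * a.repr y 2 + a.repr x 1 * a.repr y 3 -
        (a.repr y 0 * a.repr x 2 + a.repr y 1 * a.repr x 3) = 0 := by
  have hxy : ⁅x, y⁆ = (a.repr x 0 * a.repr y 1 - a.repr x 1 * a.repr y 0) • a 2 +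
      (a.repr x 0 * a.repr y 2 + a.repr x 1 * a.repr y 3 -
        (a.repr y 0 * a.repr x 2 + a.repr y 1 * a.repr x 3)) • a 4 := by
    rw [a.lie_eq_sum]
    simp only [Fin.sum_univ_five, lie_self, ha01, ha02, ha03, ha04, ha12, ha13, ha14, ha23, ha24,
      ha34, ← lie_skew (a 1) (a 0), ← lie_skew (a 2) (a 0), ← lie_skew (a 2) (a 1),
      ← lie_skew (a 3) (a 0), ← lie_skew (a 3) (a 1), ← lie_skew (a 3) (a 2),
      ← lie_skew (a 4) (a 0), ← lie_skew (a 4) (a 1), ← lie_skew (a 4) (a 2),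
      ← lie_skew (a 4) (a 3)]
    module
  rw [hxy, ← a.repr.map_eq_zero_iff, Finsupp.ext_iff]
  simp [Fin.forall_fin_succ, Finsupp.single_apply]

@[simps]
def Fin.fiveEquiv₂₂₁ {K : Type*} : (Fin 5 → K) ≃ (K × K) × ((K × K) × K) where
  toFun u := ((u 0, u 1), ((u 2, u 3), u 4))
  invFun z := ![z.1.1, z.1.2, z.2.1.1, z.2.1.2, z.2.2]
  left_inv u := by ext i; fin_cases i <;> rfl
  right_inv _ := rfl

theorem card_commuting_L55 [Fintype K] :
    (Nat.card {p : L × L // ⁅p.1, p.2⁆ = 0} : ℚ) =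
      Fintype.card K ^ 8 + Fintype.card K ^ 7 - Fintype.card K ^ 5 := by
  have hq : (Fintype.card K : ℚ) ≠ 0 := by exact_mod_cast Fintype.card_ne_zero
  let f (s : (K × K) × (K × K)) : ((K × K) × K) × ((K × K) × K) →ₗ[K] K :=
    crossTerm (dot₂ s.1) (dot₂ s.2)
  rw [card_commuting_congr (a.equivFun.toEquiv.trans Fin.fiveEquiv₂₂₁)
      (fun s t => s.1.1 * s.2.2 - s.1.2 * s.2.1 = 0 ∧ f s t = 0) fun x y => by
        simpa [f] using
          lie_eq_zero_iff_L55 a ha01 ha02 ha03 ha04 ha12 ha13 ha14 ha23 ha24 ha34 x y,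
    card_pairs_mem_ker (fun s => s.1.1 * s.2.2 - s.1.2 * s.2.1 = 0) f 0 (by simp) (by simp [f])
      fun s _ hs => crossTerm_surjective <|
      (not_and_or.mp fun h => hs (Prod.ext h.1 h.2)).imp dot₂_surjective dot₂_surjective,
    card_det_two_eq_zero]
  simp only [Nat.card_eq_fintype_card, Fintype.card_prod, Nat.cast_mul]
  field_simp
  ring

end L55

section L57

variable {K L : Type*} [Field K] [LieRing L] [LieAlgebra K L] (b : Module.Basis (Fin 5) K L)
    (hb01 : ⁅b 0, b 1⁆ = b 2) (hb02 : ⁅b 0, b 2⁆ = b 3) (hb03 : ⁅b 0, b 3⁆ = b 4)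
    (hb04 : ⁅b 0, b 4⁆ = 0) (hb12 : ⁅b 1, b 2⁆ = 0) (hb13 : ⁅b 1, b 3⁆ = 0)
    (hb14 : ⁅b 1, b 4⁆ = 0) (hb23 : ⁅b 2, b 3⁆ = 0) (hb24 : ⁅b 2, b 4⁆ = 0)
    (hb34 : ⁅b 3, b 4⁆ = 0)
include hb01 hb02 hb03 hb04 hb12 hb13 hb14 hb23 hb24 hb34

theorem lie_eq_zero_iff_L57 (x y : L) :
    ⁅x, y⁆ = 0 ↔ b.repr x 0 * b.repr y 1 - b.repr y 0 * b.repr x 1 = 0 ∧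
      b.repr x 0 * b.repr y 2 - b.repr y 0 * b.repr x 2 = 0 ∧
      b.repr x 0 * b.repr y 3 - b.repr y 0 * b.repr x 3 = 0 := by
  have hxy : ⁅x, y⁆ = (b.repr x 0 * b.repr y 1 - b.repr y 0 * b.repr x 1) • b 2 +
      (b.repr x 0 * b.repr y 2 - b.repr y 0 * b.repr x 2) • b 3 +
      (b.repr x 0 * b.repr y 3 - b.repr y 0 * b.repr x 3) • b 4 := by
    rw [b.lie_eq_sum]
    simp only [Fin.sum_univ_five, lie_self, hb01, hb02, hb03, hb04, hb12, hb13, hb14, hb23, hb24,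
      hb34, ← lie_skew (b 1) (b 0), ← lie_skew (b 2) (b 0), ← lie_skew (b 2) (b 1),
      ← lie_skew (b 3) (b 0), ← lie_skew (b 3) (b 1), ← lie_skew (b 3) (b 2),
      ← lie_skew (b 4) (b 0), ← lie_skew (b 4) (b 1), ← lie_skew (b 4) (b 2),
      ← lie_skew (b 4) (b 3)]
    module
  rw [hxy, ← b.repr.map_eq_zero_iff, Finsupp.ext_iff]
  simp [Fin.forall_fin_succ, Finsupp.single_apply]

@[simps]
def Fin.fiveEquiv₁₃₁ {K : Type*} : (Fin 5 → K) ≃ K × ((K × K × K) × K) where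
  toFun u := (u 0, ((u 1, u 2, u 3), u 4))
  invFun z := ![z.1, z.2.1.1, z.2.1.2.1, z.2.1.2.2, z.2.2]
  left_inv u := by ext i; fin_cases i <;> rfl
  right_inv _ := rfl

theorem card_commuting_L57 [Fintype K] :
    (Nat.card {p : L × L // ⁅p.1, p.2⁆ = 0} : ℚ) =
      Fintype.card K ^ 8 + Fintype.card K ^ 7 - Fintype.card K ^ 5 := by
  have hq : (Fintype.card K : ℚ) ≠ 0 := by exact_mod_cast Fintype.card_ne_zero
  have smul_id_surjective {c : K} (hc : c ≠ 0) :
      Function.Surjective (c • LinearMap.id : (K × K × K) →ₗ[K] K × K × K) :=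
    fun w => ⟨c⁻¹ • w, by simp [smul_smul, hc]⟩
  let f (s : K × K) : ((K × K × K) × K) × ((K × K × K) × K) →ₗ[K] K × K × K :=
    crossTerm (s.1 • LinearMap.id) (s.2 • LinearMap.id)
  rw [card_commuting_congr (b.equivFun.toEquiv.trans Fin.fiveEquiv₁₃₁)
      (fun s t => True ∧ f s t = 0) fun x y => by
        simpa [f, Prod.ext_iff] using
          lie_eq_zero_iff_L57 b hb01 hb02 hb03 hb04 hb12 hb13 hb14 hb23 hb24 hb34 x y,
    card_pairs_mem_ker (fun _ => True) f 0 trivial (by simp [f]) fun s _ hs =>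
      crossTerm_surjective <|
      (not_and_or.mp fun h => hs (Prod.ext h.1 h.2)).imp smul_id_surjective smul_id_surjective]
  simp only [Nat.card_eq_fintype_card, Fintype.card_prod, Nat.cast_mul, Fintype.card_subtype_true]
  field_simp
  ring

end L57

theorem commDeg_eq_of_basis {K L ι : Type*} [Field K] [Fintype K] [LieRing L] [LieAlgebra K L]
    [Fintype ι] (a : Module.Basis ι K L) :
    commDeg L =
      Nat.card {p : L × L // ⁅p.1, p.2⁆ = 0} / ((Fintype.card K : ℚ) ^ Fintype.card ι) ^ 2 := by
  rw [commDeg, Nat.card_congr a.equivFun.toEquiv, Nat.card_fun, Nat.card_eq_fintype_card (α := K),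
    Nat.card_eq_fintype_card (α := ι), Nat.cast_pow]

theorem commDeg_L55_L57_general
    (q : ℕ) (F : Type*) [Field F] [Fintype F] (hF : Fintype.card F = q)
    (L₅₅ : Type*) [LieRing L₅₅] [LieAlgebra F L₅₅]
    (L₅₇ : Type*) [LieRing L₅₇] [LieAlgebra F L₅₇]
    (a : Module.Basis (Fin 5) F L₅₅)
    (ha01 : ⁅a 0, a 1⁆ = a 2) (ha02 : ⁅a 0, a 2⁆ = a 4) (ha03 : ⁅a 0, a 3⁆ = 0)
    (ha04 : ⁅a 0, a 4⁆ = 0) (ha12 : ⁅a 1, a 2⁆ = 0) (ha13 : ⁅a 1, a 3⁆ = a 4)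
    (ha14 : ⁅a 1, a 4⁆ = 0) (ha23 : ⁅a 2, a 3⁆ = 0) (ha24 : ⁅a 2, a 4⁆ = 0)
    (ha34 : ⁅a 3, a 4⁆ = 0)
    (b : Module.Basis (Fin 5) F L₅₇)
    (hb01 : ⁅b 0, b 1⁆ = b 2) (hb02 : ⁅b 0, b 2⁆ = b 3) (hb03 : ⁅b 0, b 3⁆ = b 4)
    (hb04 : ⁅b 0, b 4⁆ = 0) (hb12 : ⁅b 1, b 2⁆ = 0) (hb13 : ⁅b 1, b 3⁆ = 0)
    (hb14 : ⁅b 1, b 4⁆ = 0) (hb23 : ⁅b 2, b 3⁆ = 0) (hb24 : ⁅b 2, b 4⁆ = 0)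
    (hb34 : ⁅b 3, b 4⁆ = 0) :
    commDeg L₅₅ = ((q : ℚ) ^ 3 + (q : ℚ) ^ 2 - 1) / (q : ℚ) ^ 5 ∧
    commDeg L₅₇ = ((q : ℚ) ^ 3 + (q : ℚ) ^ 2 - 1) / (q : ℚ) ^ 5 := by
  subst hF
  have hq : (Fintype.card F : ℚ) ≠ 0 := by exact_mod_cast Fintype.card_ne_zero
  rw [commDeg_eq_of_basis a, commDeg_eq_of_basis b,
    card_commuting_L55 a ha01 ha02 ha03 ha04 ha12 ha13 ha14 ha23 ha24 ha34,
    card_commuting_L57 b hb01 hb02 hb03 hb04 hb12 hb13 hb14 hb23 hb24 hb34, Fintype.card_fin]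
  constructor <;> field_simp

/-- Let `L₅₅` and `L₅₇` be the 5-dimensional nilpotent Lie algebras over the
finite field `F_q` with basis `{x₁, …, x₅}` and nonzero brackets among basis elements given by
`⁅x₁,x₂⁆ = x₃`, `⁅x₁,x₃⁆ = x₅`, `⁅x₂,x₄⁆ = x₅` for `L₅₅`, and
`⁅x₁,x₂⁆ = x₃`, `⁅x₁,x₃⁆ = x₄`, `⁅x₁,x₄⁆ = x₅` for `L₅₇`.
Then `d(L₅₅) = d(L₅₇) = (q³ + q² − 1)/q⁵`. -/
theorem commDeg_L55_L57
    (q : ℕ) (F : Type*) [Field F] [Fintype F] (hF : Fintype.card F = q)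
    (L₅₅ : Type*) [LieRing L₅₅] [LieAlgebra F L₅₅] [Finite L₅₅]
    (L₅₇ : Type*) [LieRing L₅₇] [LieAlgebra F L₅₇] [Finite L₅₇]
    (a : Module.Basis (Fin 5) F L₅₅)
    (ha01 : ⁅a 0, a 1⁆ = a 2) (ha02 : ⁅a 0, a 2⁆ = a 4) (ha03 : ⁅a 0, a 3⁆ = 0)
    (ha04 : ⁅a 0, a 4⁆ = 0) (ha12 : ⁅a 1, a 2⁆ = 0) (ha13 : ⁅a 1, a 3⁆ = a 4)
    (ha14 : ⁅a 1, a 4⁆ = 0) (ha23 : ⁅a 2, a 3⁆ = 0) (ha24 : ⁅a 2, a 4⁆ = 0)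
    (ha34 : ⁅a 3, a 4⁆ = 0)
    (b : Module.Basis (Fin 5) F L₅₇)
    (hb01 : ⁅b 0, b 1⁆ = b 2) (hb02 : ⁅b 0, b 2⁆ = b 3) (hb03 : ⁅b 0, b 3⁆ = b 4)
    (hb04 : ⁅b 0, b 4⁆ = 0) (hb12 : ⁅b 1, b 2⁆ = 0) (hb13 : ⁅b 1, b 3⁆ = 0)
    (hb14 : ⁅b 1, b 4⁆ = 0) (hb23 : ⁅b 2, b 3⁆ = 0) (hb24 : ⁅b 2, b 4⁆ = 0)
    (hb34 : ⁅b 3, b 4⁆ = 0) :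
    commDeg L₅₅ = ((q : ℚ) ^ 3 + (q : ℚ) ^ 2 - 1) / (q : ℚ) ^ 5 ∧
    commDeg L₅₇ = ((q : ℚ) ^ 3 + (q : ℚ) ^ 2 - 1) / (q : ℚ) ^ 5 :=
  commDeg_L55_L57_general q F hF L₅₅ L₅₇ a ha01 ha02 ha03 ha04 ha12 ha13 ha14 ha23 ha24 ha34 b hb01
    hb02 hb03 hb04 hb12 hb13 hb14 hb23 hb24 hb34
end

section
/- Let L be an n-dimensional non-abelian Lie algebra over the finite field F_q with trivial center, Z(L) = 0. Then d(L) ≤ (q^n + q − 1)/q^{n+1}. -/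
theorem Submodule.card_mul_card_le_of_ne_top {K V : Type*} [Field K] [Fintype K]
    [AddCommGroup V] [Module K V] [Finite V] {W : Submodule K V} (hW : W ≠ ⊤) :
    Fintype.card K * Nat.card W ≤ Nat.card V := by
  classical
  cases nonempty_fintype V
  rw [Nat.card_eq_fintype_card, Nat.card_eq_fintype_card,
    Module.card_eq_pow_finrank (K := K) (V := W), Module.card_eq_pow_finrank (K := K) (V := V),
    ← pow_succ']
  exact Nat.pow_le_pow_right Fintype.card_pos (Submodule.finrank_lt hW)

open Finset

section LieRing

variable {L : Type*} [LieRing L]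

theorem card_commutingPairs_eq_sum [Fintype L] :
    Nat.card {p : L × L // ⁅p.1, p.2⁆ = 0} = ∑ x : L, Nat.card {y : L // ⁅x, y⁆ = 0} := by
  rw [Nat.card_congr (Equiv.subtypeProdEquivSigmaSubtype fun x y : L => ⁅x, y⁆ = 0),
    Nat.card_sigma]

theorem LieAlgebra.card_mul_card_centralizer_le_of_notMem_center {F : Type*} [Field F]
    [Fintype F] [LieAlgebra F L] [Finite L] {x : L} (hx : x ∉ center F L) :
    Fintype.card F * Nat.card {y : L // ⁅x, y⁆ = 0} ≤ Nat.card L := by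
  have hker : LinearMap.ker (ad F L x) ≠ ⊤ := by
    refine fun h ↦ hx fun y ↦ ?_
    have hy : ⁅x, y⁆ = 0 := LinearMap.mem_ker.mp (h ▸ Submodule.mem_top)
    rw [← lie_skew, hy, neg_zero]
  have hcard : Nat.card {y : L // ⁅x, y⁆ = 0} = Nat.card (LinearMap.ker (ad F L x)) :=
    Nat.card_congr (Equiv.subtypeEquivRight fun y ↦ by simp [LinearMap.mem_ker])
  exact hcard ▸ Submodule.card_mul_card_le_of_ne_top hker

theorem LieAlgebra.card_mul_card_commutingPairs_add_card_le {F : Type*} [Field F] [Fintype F]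
    [LieAlgebra F L] [Finite L] (hZ : center F L = ⊥) :
    Fintype.card F * Nat.card {p : L × L // ⁅p.1, p.2⁆ = 0} + Nat.card L ≤
      (Fintype.card F + Nat.card L) * Nat.card L := by
  classical
  cases nonempty_fintype L
  set q := Fintype.card F
  set N := Nat.card L
  have hzero : Nat.card {y : L // ⁅(0 : L), y⁆ = 0} = N :=
    Nat.card_congr (Equiv.subtypeUnivEquiv zero_lie)
  have hrow : ∀ x ∈ univ.erase (0 : L), q * Nat.card {y : L // ⁅x, y⁆ = 0} ≤ N := fun x hx ↦
    card_mul_card_centralizer_le_of_notMem_center <| by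
      rw [hZ, LieSubmodule.mem_bot]; exact ne_of_mem_erase hx
  calc q * Nat.card {p : L × L // ⁅p.1, p.2⁆ = 0} + N
      = q * N + ∑ x ∈ univ.erase (0 : L), q * Nat.card {y : L // ⁅x, y⁆ = 0} + N := by
        rw [card_commutingPairs_eq_sum, ← add_sum_erase _ _ (mem_univ 0), hzero, mul_add, mul_sum]
    _ ≤ q * N + ∑ _x ∈ univ.erase (0 : L), N + N := by gcongr with x hx; exact hrow x hx
    _ = (q + N) * N := by
        rw [add_assoc, sum_erase_add _ _ (mem_univ 0), sum_const, card_univ,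
          ← Nat.card_eq_fintype_card, smul_eq_mul, add_mul]

theorem LieAlgebra.commDeg_le_of_center_eq_bot {F : Type*} [Field F] [Fintype F]
    [LieAlgebra F L] [Finite L] (hZ : center F L = ⊥) :
    commDeg L ≤ ((Nat.card L : ℚ) + Fintype.card F - 1) / (Fintype.card F * Nat.card L) := by
  have hpairs : (Fintype.card F : ℚ) * Nat.card {p : L × L // ⁅p.1, p.2⁆ = 0} + Nat.card L ≤
      (Fintype.card F + Nat.card L) * Nat.card L := by
    exact_mod_cast card_mul_card_commutingPairs_add_card_le hZ
  have hN : (0 : ℚ) < Nat.card L := by exact_mod_cast Nat.card_pos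
  rw [commDeg, div_le_div_iff₀ (by positivity) (by positivity)]
  nlinarith [mul_le_mul_of_nonneg_right hpairs hN.le]

end LieRing

/-- If `L` is an `n`-dimensional non-abelian Lie algebra over the finite field
`F_q` with trivial center, then `d(L) ≤ (q^n + q − 1)/q^(n+1)`. -/
theorem commDeg_le_of_center_eq_bot
    (q : ℕ) (F : Type*) [Field F] [Fintype F] (hF : Fintype.card F = q)
    (n : ℕ) (L : Type*) [LieRing L] [LieAlgebra F L] [Finite L]
    (hn : Module.finrank F L = n)
    (hZ : LieAlgebra.center F L = ⊥) :
    commDeg L ≤ ((q : ℚ) ^ n + q - 1) / (q : ℚ) ^ (n + 1) := by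
  have hcard : Nat.card L = q ^ n := by
    cases nonempty_fintype L
    rw [Nat.card_eq_fintype_card, Module.card_eq_pow_finrank (K := F), hF, hn]
  have := LieAlgebra.commDeg_le_of_center_eq_bot hZ
  rwa [hcard, hF, Nat.cast_pow, ← pow_succ'] at this
end

section
/- Let L be an n-dimensional non-abelian Lie algebra over the finite field F_q with trivial center, Z(L) = 0. Then d(L) = (q^n + q − 1)/q^{n+1} if and only if dim L² = 1, where L² = [L, L] is the derived subalgebra. -/
/-!
Counting commuting pairs by their first entry gives `|L|² d(L) = ∑ₓ q ^ dim ker (ad x)`.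
Since `Z(L) = 0`, every `ad x` with `x ≠ 0` has rank at least one, so the sum is at most
`q ^ n + (q ^ n - 1) q ^ (n - 1) = q ^ (2n) (q ^ n + q - 1) / q ^ (n + 1)`, with equality exactly
when every nonzero `ad x` has rank one.

Rank one for every nonzero `ad x` is equivalent to `dim L² = 1`. One direction holds because
`0 ≠ im (ad x) ⊆ L²`. Conversely, if `ad x` and `ad y` have rank one and distinct images, then
`ad (x + y)` having rank at most one forces `ker (ad x) = ker (ad y)`. If some two images
differed, every nonzero `ad z` would have the kernel of `ad x`, which contains `x`, so `x` would
be central. Hence all the images are one line, and that line is `L²`.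
-/

open Module LinearMap

theorem Fintype.sum_eq_add_card_sub_one_nsmul_iff {ι M : Type*} [Fintype ι] [DecidableEq ι]
    [AddCommMonoid M] [PartialOrder M] [IsOrderedCancelAddMonoid M] {f : ι → M} (a : ι) {m : M}
    (hle : ∀ i ≠ a, f i ≤ m) :
    ∑ i, f i = f a + (Fintype.card ι - 1) • m ↔ ∀ i ≠ a, f i = m := by
  have hconst : (Fintype.card ι - 1) • m = ∑ _i ∈ Finset.univ.erase a, m := by
    rw [Finset.sum_const, Finset.card_erase_of_mem (Finset.mem_univ a), Finset.card_univ]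
  rw [← Finset.add_sum_erase _ _ (Finset.mem_univ a), hconst, add_right_inj,
    Finset.sum_eq_sum_iff_of_le (by simpa using hle)]
  simp

namespace LinearMap

variable {K V W : Type*} [Field K] [AddCommGroup V] [Module K V] [AddCommGroup W] [Module K W]

theorem range_le_range_add_of_not_ker_le {f g : V →ₗ[K] W} [FiniteDimensional K (range f)]
    (hf : finrank K (range f) ≤ 1) (hgf : ¬ker g ≤ ker f) : range f ≤ range (f + g) := by
  obtain ⟨u, hug, huf⟩ := SetLike.not_le_iff_exists.1 hgf
  have hfu : f u ≠ 0 := fun h => huf (mem_ker.2 h)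
  have hspan : K ∙ f u = range f :=
    Submodule.eq_of_le_of_finrank_le
      ((Submodule.span_singleton_le_iff_mem _ _).2 (mem_range_self f u))
      (by rwa [finrank_span_singleton hfu])
  rw [← hspan, Submodule.span_singleton_le_iff_mem]
  exact ⟨u, by simp [mem_ker.1 hug]⟩

theorem range_eq_range_of_ker_ne [FiniteDimensional K V] {f g : V →ₗ[K] W}
    (hf : finrank K (range f) = 1) (hg : finrank K (range g) = 1)
    (hfg : finrank K (range (f + g)) ≤ 1) (hker : ker f ≠ ker g) : range f = range g := by
  have hdim : finrank K (ker f) = finrank K (ker g) := by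
    have := f.finrank_range_add_finrank_ker
    have := g.finrank_range_add_finrank_ker
    omega
  have hgf : ¬ker g ≤ ker f := fun h => hker (Submodule.eq_of_le_of_finrank_le h hdim.le).symm
  have hfg' : ¬ker f ≤ ker g := fun h => hker (Submodule.eq_of_le_of_finrank_le h hdim.ge)
  have hf' : range f = range (f + g) :=
    Submodule.eq_of_le_of_finrank_le (range_le_range_add_of_not_ker_le hf.le hgf) (hf ▸ hfg)
  have hg' : range g = range (f + g) :=
    Submodule.eq_of_le_of_finrank_le
      (add_comm g f ▸ range_le_range_add_of_not_ker_le hg.le hfg') (hg ▸ hfg)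
  rw [hf', hg']

end LinearMap

namespace LieAlgebra

section CommRing

variable {R L : Type*} [CommRing R] [LieRing L] [LieAlgebra R L]

theorem ad_ne_zero_of_center_eq_bot (hZ : center R L = ⊥) {x : L} (hx : x ≠ 0) :
    ad R L x ≠ 0 := by
  intro h
  have hxZ : x ∈ center R L := by
    rw [LieModule.mem_maxTrivSubmodule]
    intro y
    rw [← lie_skew, ← ad_apply R, h, LinearMap.zero_apply, neg_zero]
  rw [hZ, LieSubmodule.mem_bot] at hxZ
  exact hx hxZ

theorem range_ad_le_derived (x : L) :
    range (ad R L x) ≤ (⁅(⊤ : LieIdeal R L), ⊤⁆ : LieIdeal R L).toSubmodule := by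
  rintro _ ⟨y, rfl⟩
  exact LieSubmodule.lie_mem_lie (LieSubmodule.mem_top x) (LieSubmodule.mem_top y)

end CommRing

variable {K L : Type*} [Field K] [LieRing L] [LieAlgebra K L] [FiniteDimensional K L]

theorem finrank_range_ad_pos (hZ : center K L = ⊥) {x : L} (hx : x ≠ 0) :
    0 < finrank K (range (ad K L x)) := by
  rw [Nat.pos_iff_ne_zero, Ne, Submodule.finrank_eq_zero, range_eq_bot]
  exact ad_ne_zero_of_center_eq_bot hZ hx

theorem finrank_ker_ad_lt (hZ : center K L = ⊥) {x : L} (hx : x ≠ 0) :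
    finrank K (ker (ad K L x)) < finrank K L := by
  have := (ad K L x).finrank_range_add_finrank_ker
  have := finrank_range_ad_pos hZ hx
  omega

theorem finrank_range_ad_eq_one_iff (hZ : center K L = ⊥) {x : L} (hx : x ≠ 0) :
    finrank K (range (ad K L x)) = 1 ↔ finrank K (ker (ad K L x)) = finrank K L - 1 := by
  have := (ad K L x).finrank_range_add_finrank_ker
  have := finrank_range_ad_pos hZ hx
  omega

theorem range_ad_eq_range_ad (hZ : center K L = ⊥)
    (h1 : ∀ x : L, x ≠ 0 → finrank K (range (ad K L x)) = 1) {x y : L} (hx : x ≠ 0)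
    (hy : y ≠ 0) : range (ad K L x) = range (ad K L y) := by
  have hle : ∀ z : L, finrank K (range (ad K L z)) ≤ 1 := by
    intro z
    rcases eq_or_ne z 0 with rfl | hz
    · rw [map_zero, range_zero, finrank_bot]
      exact zero_le_one
    · exact (h1 z hz).le
  have hker : ∀ a b : L, a ≠ 0 → b ≠ 0 →
      range (ad K L a) ≠ range (ad K L b) → ker (ad K L a) = ker (ad K L b) :=
    fun a b ha hb => not_imp_comm.1 <|
      range_eq_range_of_ker_ne (h1 a ha) (h1 b hb) (by rw [← map_add]; exact hle _)
  by_contra hne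
  have hker_eq : ∀ z : L, z ≠ 0 → ker (ad K L z) = ker (ad K L x) := by
    intro z hz
    by_cases hzx : range (ad K L z) = range (ad K L x)
    · rw [hker z y hz hy (hzx ▸ hne), hker x y hx hy hne]
    · exact hker z x hz hx hzx
  have hxZ : x ∈ center K L := by
    rw [LieModule.mem_maxTrivSubmodule]
    intro z
    rcases eq_or_ne z 0 with rfl | hz
    · exact zero_lie x
    · have hx_ker : x ∈ ker (ad K L z) := hker_eq z hz ▸ lie_self x
      exact hx_ker
  rw [hZ, LieSubmodule.mem_bot] at hxZ
  exact hx hxZ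

theorem finrank_derived_eq_one_iff [Nontrivial L] (hZ : center K L = ⊥) :
    finrank K (⁅(⊤ : LieIdeal K L), (⊤ : LieIdeal K L)⁆ : LieIdeal K L) = 1 ↔
      ∀ x : L, x ≠ 0 → finrank K (range (ad K L x)) = 1 := by
  constructor
  · intro hD x hx
    have hle := Submodule.finrank_mono (range_ad_le_derived (R := K) x)
    have hpos := finrank_range_ad_pos hZ hx
    change _ ≤ finrank K (⁅(⊤ : LieIdeal K L), (⊤ : LieIdeal K L)⁆ : LieIdeal K L) at hle
    omega
  · intro h1
    obtain ⟨a, ha⟩ := exists_ne (0 : L)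
    have hD : (⁅(⊤ : LieIdeal K L), (⊤ : LieIdeal K L)⁆ : LieIdeal K L).toSubmodule =
        range (ad K L a) := by
      refine le_antisymm ?_ (range_ad_le_derived a)
      rw [LieSubmodule.lieIdeal_oper_eq_linear_span', Submodule.span_le]
      rintro _ ⟨z, -, w, -, rfl⟩
      rcases eq_or_ne z 0 with rfl | hz
      · simp
      · rw [← range_ad_eq_range_ad hZ h1 hz ha]
        exact mem_range_self _ w
    change finrank K (⁅(⊤ : LieIdeal K L), (⊤ : LieIdeal K L)⁆ : LieIdeal K L).toSubmodule = 1
    rw [hD, h1 a ha]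

theorem natCard_commuting_pairs [Fintype L] :
    Nat.card {p : L × L // ⁅p.1, p.2⁆ = 0} = ∑ x : L, Nat.card K ^ finrank K (ker (ad K L x)) := by
  rw [Nat.card_congr (Equiv.subtypeProdEquivSigmaSubtype fun x y : L => ⁅x, y⁆ = 0),
    Nat.card_sigma]
  refine Finset.sum_congr rfl fun x _ => ?_
  rw [← natCard_eq_pow_finrank]
  rfl

end LieAlgebra

theorem pow_add_sub_one_div_pow_succ_eq {q n : ℕ} (hq : q ≠ 0) (hn : n ≠ 0) :
    ((q : ℚ) ^ n + q - 1) / (q : ℚ) ^ (n + 1) =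
      ((q ^ n + (q ^ n - 1) * q ^ (n - 1) : ℕ) : ℚ) / ((q : ℚ) ^ n) ^ 2 := by
  obtain ⟨m, rfl⟩ := Nat.exists_eq_add_one_of_ne_zero hn
  have hpos : 1 ≤ q ^ (m + 1) := Nat.one_le_pow _ _ (Nat.pos_of_ne_zero hq)
  rw [Nat.add_sub_cancel, div_eq_div_iff (by positivity) (by positivity)]
  push_cast [Nat.cast_sub hpos]
  ring

/-- If `L` is an `n`-dimensional non-abelian Lie algebra over the finite field
`F_q` with trivial center, then `d(L) = (q^n + q − 1)/q^(n+1)` if and only if the derived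
subalgebra `L² = ⁅L, L⁆` is 1-dimensional. -/
theorem commDeg_eq_iff_finrank_derived_eq_one
    (q : ℕ) (F : Type*) [Field F] [Fintype F] (hF : Fintype.card F = q)
    (n : ℕ) (L : Type*) [LieRing L] [LieAlgebra F L] [Finite L]
    (hn : Module.finrank F L = n)
    (hna : ¬IsLieAbelian L)
    (hZ : LieAlgebra.center F L = ⊥) :
    commDeg L = ((q : ℚ) ^ n + q - 1) / (q : ℚ) ^ (n + 1) ↔
      Module.finrank F (⁅(⊤ : LieIdeal F L), (⊤ : LieIdeal F L)⁆ : LieIdeal F L) = 1 := by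
  classical
  have : Fintype L := Fintype.ofFinite L
  have : Module.Finite F L := Module.Finite.of_finite
  have : Nontrivial L := not_subsingleton_iff_nontrivial.1 fun _ =>
    hna ⟨fun _ _ => Subsingleton.elim _ _⟩
  have hq : 1 < q := hF ▸ Fintype.one_lt_card
  have hn0 : n ≠ 0 := hn ▸ finrank_pos.ne'
  rw [← Nat.card_eq_fintype_card] at hF
  have hcardL : Nat.card L = q ^ n := by rw [natCard_eq_pow_finrank (K := F), hF, hn]
  have hbound : q ^ n + (q ^ n - 1) * q ^ (n - 1) =
      q ^ finrank F (ker (LieAlgebra.ad F L 0)) + (Fintype.card L - 1) • q ^ (n - 1) := by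
    rw [map_zero, ker_zero, finrank_top, hn, ← Nat.card_eq_fintype_card, hcardL, smul_eq_mul]
  rw [commDeg, LieAlgebra.natCard_commuting_pairs (K := F), hcardL, hF, Nat.cast_pow,
    pow_add_sub_one_div_pow_succ_eq (by omega) hn0, div_left_inj' (by positivity), Nat.cast_inj,
    LieAlgebra.finrank_derived_eq_one_iff hZ, hbound,
    Fintype.sum_eq_add_card_sub_one_nsmul_iff 0 fun x hx =>
      Nat.pow_le_pow_right hq.le (hn ▸ Nat.le_sub_one_of_lt (LieAlgebra.finrank_ker_ad_lt hZ hx))]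
  refine forall₂_congr fun x hx => ?_
  rw [Nat.pow_right_inj hq, LieAlgebra.finrank_range_ad_eq_one_iff hZ hx, hn]
end

section
/- Let L be a finite-dimensional non-abelian Lie algebra over the finite field F_q with dim Z(L) ≥ 1. Then d(L) ≤ (q² + q − 1)/q³. -/
/-!
Summing the sizes of centralizers, `d(L) = |L|⁻² ∑ₓ |C(x)|`. A central `x` has `C(x) = L`, and
any other `x` has a proper subspace `C(x)`, of size at most `|L| / q`; hence
`d(L) ≤ 1/q + (1 - 1/q) |Z(L)| / |L|`. A non-abelian `L` has a centre of codimension at least `2`,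
since for `x ∉ Z(L)` the chain `Z(L) < C(x) < L` is strict (`x ∈ C(x)`), so `|Z(L)| / |L| ≤ 1/q²`.
-/

open Module LieAlgebra

theorem Submodule.natCard_pow_mul_natCard_le {F V : Type*} [Field F] [Finite F] [AddCommGroup V]
    [Module F V] [Finite V] (W : Submodule F V) {k : ℕ} (h : finrank F W + k ≤ finrank F V) :
    Nat.card F ^ k * Nat.card W ≤ Nat.card V := by
  rw [natCard_eq_pow_finrank (K := F) (V := W), natCard_eq_pow_finrank (K := F) (V := V),
    ← pow_add, add_comm]
  exact Nat.pow_le_pow_right Nat.card_pos h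

theorem LieRing.natCard_commuting_pairs_eq_sum {L : Type*} [LieRing L] [Fintype L] :
    Nat.card {p : L × L // ⁅p.1, p.2⁆ = 0} = ∑ x : L, Nat.card {y : L // ⁅x, y⁆ = 0} := by
  rw [Nat.card_congr (Equiv.subtypeProdEquivSigmaSubtype fun x y : L => ⁅x, y⁆ = 0),
    Nat.card_sigma]

namespace LieAlgebra

variable {F L : Type*} [Field F] [LieRing L] [LieAlgebra F L]

theorem center_le_ker_ad (x : L) : (center F L : Submodule F L) ≤ LinearMap.ker (ad F L x) :=
  fun z hz => (LieModule.mem_maxTrivSubmodule F L L z).mp hz x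

theorem ker_ad_eq_top_iff {x : L} : LinearMap.ker (ad F L x) = ⊤ ↔ x ∈ center F L := by
  rw [LieModule.mem_maxTrivSubmodule, Submodule.eq_top_iff']
  refine forall_congr' fun y => ?_
  rw [LinearMap.mem_ker, ad_apply, ← lie_skew, neg_eq_zero]

theorem finrank_center_add_two_le [FiniteDimensional F L] (h : ¬IsLieAbelian L) :
    finrank F (center F L) + 2 ≤ finrank F L := by
  obtain ⟨x, hx⟩ : ∃ x : L, x ∉ center F L := by
    by_contra! hall
    exact h ((isLieAbelian_iff_center_eq_top F L).mpr (eq_top_iff.mpr fun x _ => hall x))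
  have center_lt : (center F L : Submodule F L) < LinearMap.ker (ad F L x) :=
    SetLike.lt_iff_le_and_exists.mpr ⟨center_le_ker_ad x, x, by simp [ad_apply], hx⟩
  have ker_lt := Submodule.finrank_lt (mt (ker_ad_eq_top_iff (F := F)).mp hx)
  have := Submodule.finrank_lt_finrank_of_lt center_lt
  change finrank F (center F L : Submodule F L) + 2 ≤ _
  omega

theorem natCard_mul_natCard_centralizer_le [Finite F] [Finite L] {x : L}
    (hx : x ∉ center F L) : Nat.card F * Nat.card {y : L // ⁅x, y⁆ = 0} ≤ Nat.card L := by
  simpa using (LinearMap.ker (ad F L x)).natCard_pow_mul_natCard_le (k := 1)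
    (Submodule.finrank_lt (mt (ker_ad_eq_top_iff (F := F)).mp hx))

theorem commDeg_le_inv_add_center_ratio [Finite F] [Finite L] :
    commDeg L ≤ 1 / Nat.card F + (1 - 1 / Nat.card F) *
      ((Nat.card (center F L) : ℚ) / Nat.card L) := by
  classical
  have := Fintype.ofFinite L
  have card_le (x : L) : (Nat.card {y : L // ⁅x, y⁆ = 0} : ℚ) ≤ Nat.card L := by
    exact_mod_cast Finite.card_subtype_le _
  have card_le_of_notMem {x : L} (hx : x ∉ center F L) :
      (Nat.card F : ℚ) * Nat.card {y : L // ⁅x, y⁆ = 0} ≤ Nat.card L := by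
    exact_mod_cast natCard_mul_natCard_centralizer_le hx
  have hq : (0 : ℚ) < Nat.card F := Nat.cast_pos.mpr Nat.card_pos
  have hN : (0 : ℚ) < Nat.card L := Nat.cast_pos.mpr Nat.card_pos
  rw [commDeg, LieRing.natCard_commuting_pairs_eq_sum, Nat.cast_sum]
  set q : ℚ := (Nat.card F : ℚ)
  set N : ℚ := (Nat.card L : ℚ)
  have centralizer_le (x : L) : (Nat.card {y : L // ⁅x, y⁆ = 0} : ℚ) ≤
      N / q + (1 - 1 / q) * N * if x ∈ center F L then 1 else 0 := by
    split_ifs with hx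
    · exact (card_le x).trans_eq (by field_simp; ring)
    · rw [mul_zero, add_zero, le_div_iff₀ hq, mul_comm]
      exact card_le_of_notMem hx
  have sum_le : (∑ x : L, (Nat.card {y : L // ⁅x, y⁆ = 0} : ℚ)) ≤
      N * (N / q) + (1 - 1 / q) * N * Nat.card (center F L) := by
    refine (Finset.sum_le_sum fun x _ => centralizer_le x).trans_eq ?_
    rw [Finset.sum_add_distrib, Finset.sum_const, ← Finset.mul_sum, Finset.sum_boole,
      Finset.card_univ, nsmul_eq_mul, ← Fintype.card_subtype, ← Nat.card_eq_fintype_card,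
      ← Nat.card_eq_fintype_card]
  rw [div_le_iff₀ (by positivity)]
  refine sum_le.trans_eq ?_
  field_simp

end LieAlgebra

theorem commDeg_le_of_one_le_finrank_center_general
    (q : ℕ) (F : Type*) [Field F] [Fintype F] (hF : Fintype.card F = q)
    (L : Type*) [LieRing L] [LieAlgebra F L] [Finite L]
    (hna : ¬IsLieAbelian L) :
    commDeg L ≤ ((q : ℚ) ^ 2 + q - 1) / (q : ℚ) ^ 3 := by
  have card_F : Nat.card F = q := Nat.card_eq_fintype_card.trans hF
  have hq : (1 : ℚ) ≤ q := by exact_mod_cast card_F ▸ Nat.card_pos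
  have center_ratio_le : (Nat.card (center F L) : ℚ) / Nat.card L ≤ 1 / q ^ 2 := by
    have := (center F L : Submodule F L).natCard_pow_mul_natCard_le (finrank_center_add_two_le hna)
    rw [card_F] at this
    rw [div_le_div_iff₀ (Nat.cast_pos.mpr Nat.card_pos) (by positivity), one_mul, mul_comm]
    exact_mod_cast this
  calc commDeg L
      ≤ 1 / q + (1 - 1 / q) * ((Nat.card (center F L) : ℚ) / Nat.card L) := by
        simpa only [card_F] using commDeg_le_inv_add_center_ratio (F := F)
    _ ≤ 1 / q + (1 - 1 / q) * (1 / q ^ 2) := by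
        have : 1 / (q : ℚ) ≤ 1 := div_le_one_of_le₀ hq (by positivity)
        gcongr
    _ = ((q : ℚ) ^ 2 + q - 1) / (q : ℚ) ^ 3 := by
        field_simp
        ring

/-- If `L` is a finite-dimensional non-abelian Lie algebra over the finite
field `F_q` with `dim Z(L) ≥ 1`, then `d(L) ≤ (q² + q − 1)/q³`. -/
theorem commDeg_le_of_one_le_finrank_center
    (q : ℕ) (F : Type*) [Field F] [Fintype F] (hF : Fintype.card F = q)
    (L : Type*) [LieRing L] [LieAlgebra F L] [Finite L]
    (hna : ¬IsLieAbelian L)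
    (hZ : 1 ≤ Module.finrank F (LieAlgebra.center F L)) :
    commDeg L ≤ ((q : ℚ) ^ 2 + q - 1) / (q : ℚ) ^ 3 :=
  commDeg_le_of_one_le_finrank_center_general q F hF L hna
end

section
/- Let L be a finite-dimensional non-abelian Lie algebra over a finite field F_q. Then d(L) ≤ 5/8. -/
theorem AddSubgroup.two_mul_card_le_card_of_ne_top {G : Type*} [AddGroup G] [Finite G]
    {H : AddSubgroup G} (hH : H ≠ ⊤) : 2 * Nat.card H ≤ Nat.card G := by
  rw [← H.card_mul_index, mul_comm]
  exact Nat.mul_le_mul_left _ (H.one_lt_index_of_ne_top hH)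

namespace LieRing

variable {L : Type*} [LieRing L]

def centralizer (a : L) : AddSubgroup L :=
  (AddMonoidHom.mk' (⁅a, ·⁆) (lie_add a)).ker

@[simp]
theorem mem_centralizer {a y : L} : y ∈ centralizer a ↔ ⁅a, y⁆ = 0 := Iff.rfl

variable (L) in
def center : AddSubgroup L :=
  (LieAlgebra.center ℤ L).toSubmodule.toAddSubgroup

theorem mem_center {z : L} : z ∈ center L ↔ ∀ y : L, ⁅z, y⁆ = 0 := by
  simp only [center, Submodule.mem_toAddSubgroup, LieSubmodule.mem_toSubmodule,
    LieModule.mem_maxTrivSubmodule]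
  exact forall_congr' fun y => by rw [← lie_skew, neg_eq_zero]

theorem centralizer_eq_top_iff {a : L} : centralizer a = ⊤ ↔ a ∈ center L := by
  simp [AddSubgroup.eq_top_iff', mem_center]

theorem center_eq_top_iff : center L = ⊤ ↔ IsLieAbelian L := by
  rw [LieAlgebra.isLieAbelian_iff_center_eq_top ℤ, center, ← LieSubmodule.toSubmodule_eq_top,
    Submodule.toAddSubgroup_eq_top]

theorem lie_eq_zero_of_mem_center_sup_zmultiples {x a b : L}
    (ha : a ∈ center L ⊔ AddSubgroup.zmultiples x)
    (hb : b ∈ center L ⊔ AddSubgroup.zmultiples x) :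
    ⁅a, b⁆ = 0 := by
  obtain ⟨z, hz, _, ⟨m, rfl⟩, rfl⟩ := AddSubgroup.mem_sup.mp ha
  obtain ⟨w, hw, _, ⟨n, rfl⟩, rfl⟩ := AddSubgroup.mem_sup.mp hb
  rw [mem_center] at hz hw
  have hw' (y : L) : ⁅y, w⁆ = 0 := by rw [← lie_skew, hw, neg_zero]
  simp [hz, hw']

theorem four_le_index_center [Finite L] (h : ¬IsLieAbelian L) : 4 ≤ (center L).index := by
  obtain ⟨x, hx⟩ : ∃ x, x ∉ center L := by
    by_contra! hall
    exact h (center_eq_top_iff.mp (AddSubgroup.eq_top_iff' _ |>.mpr hall))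
  set W := center L ⊔ AddSubgroup.zmultiples x
  have hxW : x ∈ W := AddSubgroup.mem_sup_right (AddSubgroup.mem_zmultiples x)
  have hZW : ¬W ≤ center L := fun hWZ => hx (hWZ hxW)
  have hW : W ≠ ⊤ := fun hW => h ⟨fun a b =>
    have hmem := (AddSubgroup.eq_top_iff' W).mp hW
    lie_eq_zero_of_mem_center_sup_zmultiples (hmem a) (hmem b)⟩
  rw [← AddSubgroup.relIndex_mul_index (le_sup_left : center L ≤ W)]
  exact Nat.mul_le_mul
    (AddSubgroup.one_lt_index_of_ne_top (mt AddSubgroup.addSubgroupOf_eq_top.mp hZW))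
    (AddSubgroup.one_lt_index_of_ne_top hW)

theorem four_mul_card_center_le [Finite L] (h : ¬IsLieAbelian L) :
    4 * Nat.card (center L) ≤ Nat.card L := by
  rw [← (center L).card_mul_index, mul_comm]
  exact Nat.mul_le_mul_left _ (four_le_index_center h)

theorem two_mul_card_centralizer_le [Finite L] {a : L} (ha : a ∉ center L) :
    2 * Nat.card (centralizer a) ≤ Nat.card L :=
  AddSubgroup.two_mul_card_le_card_of_ne_top (mt centralizer_eq_top_iff.mp ha)

theorem card_commuting_pairs_eq_sum [Fintype L] :
    Nat.card {p : L × L // ⁅p.1, p.2⁆ = 0} = ∑ a : L, Nat.card (centralizer a) := by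
  rw [Nat.card_congr (Equiv.subtypeProdEquivSigmaSubtype fun a b : L => ⁅a, b⁆ = 0),
    Nat.card_sigma]
  rfl

theorem two_mul_card_commuting_pairs_le [Finite L] :
    2 * Nat.card {p : L × L // ⁅p.1, p.2⁆ = 0} ≤
      Nat.card L * Nat.card L + Nat.card (center L) * Nat.card L := by
  classical
  cases nonempty_fintype L
  have hbound (a : L) :
      2 * Nat.card (centralizer a) ≤ Nat.card L + if a ∈ center L then Nat.card L else 0 := by
    split_ifs with ha
    · have := Finite.card_subtype_le (· ∈ centralizer a)
      omega
    · exact (two_mul_card_centralizer_le ha).trans le_self_add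
  calc 2 * Nat.card {p : L × L // ⁅p.1, p.2⁆ = 0}
      = ∑ a : L, 2 * Nat.card (centralizer a) := by
        rw [card_commuting_pairs_eq_sum, Finset.mul_sum]
    _ ≤ ∑ a : L, (Nat.card L + if a ∈ center L then Nat.card L else 0) :=
        Finset.sum_le_sum fun a _ => hbound a
    _ = Nat.card L * Nat.card L + Nat.card (center L) * Nat.card L := by
        rw [Finset.sum_add_distrib, ← Finset.sum_filter]
        simp [Fintype.card_subtype]

theorem eight_mul_card_commuting_pairs_le [Finite L] (h : ¬IsLieAbelian L) :
    8 * Nat.card {p : L × L // ⁅p.1, p.2⁆ = 0} ≤ 5 * Nat.card L ^ 2 := by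
  have hpairs := two_mul_card_commuting_pairs_le (L := L)
  have hcenter := four_mul_card_center_le h
  nlinarith

end LieRing

theorem commDeg_le_five_eighths_general
    (L : Type*) [LieRing L] [Finite L]
    (hna : ¬IsLieAbelian L) :
    commDeg L ≤ 5 / 8 := by
  have hpairs : (8 : ℚ) * Nat.card {p : L × L // ⁅p.1, p.2⁆ = 0} ≤ 5 * (Nat.card L : ℚ) ^ 2 := by
    exact_mod_cast LieRing.eight_mul_card_commuting_pairs_le hna
  have hL : (0 : ℚ) < Nat.card L := by exact_mod_cast Nat.card_pos
  rw [commDeg, div_le_iff₀ (by positivity)]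
  linarith

/-- If `L` is a finite-dimensional non-abelian Lie algebra over a finite
field `F_q`, then `d(L) ≤ 5/8`. -/
theorem commDeg_le_five_eighths
    (F : Type*) [Field F] [Fintype F]
    (L : Type*) [LieRing L] [LieAlgebra F L] [Finite L]
    (hna : ¬IsLieAbelian L) :
    commDeg L ≤ 5 / 8 :=
  commDeg_le_five_eighths_general L hna
end

section
/- Let L be a finite-dimensional Lie algebra over the finite field F_q and H a Lie subalgebra of L. Then (|H|²/|L|²) · d(H) ≤ d(L) ≤ d(H). -/
theorem AddSubgroup.card_mul_card_le_card_mul_card_inf {G : Type*} [AddGroup G] [Finite G]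
    (A B : AddSubgroup G) :
    Nat.card A * Nat.card B ≤ Nat.card G * Nat.card (A ⊓ B : AddSubgroup G) := by
  have hpos : 0 < A.index * B.index :=
    Nat.pos_of_ne_zero (mul_ne_zero A.index_ne_zero_of_finite B.index_ne_zero_of_finite)
  refine Nat.le_of_mul_le_mul_right ?_ hpos
  calc Nat.card A * Nat.card B * (A.index * B.index)
      = (Nat.card A * A.index) * (Nat.card B * B.index) := by ring
    _ = Nat.card G * ((A ⊓ B).index * Nat.card (A ⊓ B : AddSubgroup G)) := by
        rw [A.card_mul_index, B.card_mul_index, (A ⊓ B).index_mul_card]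
    _ ≤ Nat.card G * (A.index * B.index * Nat.card (A ⊓ B : AddSubgroup G)) := by
        gcongr; exact AddSubgroup.index_inf_le
    _ = Nat.card G * Nat.card (A ⊓ B : AddSubgroup G) * (A.index * B.index) := by ring

section

variable {L : Type*} [LieRing L]

def lieCentralizer (z : L) : AddSubgroup L :=
  (AddMonoidHom.mk' (⁅z, ·⁆) (lie_add z)).ker

@[simp]
theorem mem_lieCentralizer {z y : L} : y ∈ lieCentralizer z ↔ ⁅z, y⁆ = 0 := Iff.rfl

variable (K : AddSubgroup L)

theorem card_commute_pairs_swap :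
    Nat.card {p : L × K // ⁅p.1, (p.2 : L)⁆ = 0} =
      Nat.card {p : K × L // ⁅(p.1 : L), p.2⁆ = 0} :=
  Nat.card_congr <| (Equiv.prodComm L K).subtypeEquiv fun p => by
    rw [Equiv.prodComm_apply, Prod.fst_swap, Prod.snd_swap, ← lie_skew, neg_eq_zero]

theorem card_commute_pairs_le [Finite L] :
    Nat.card {p : K × K // ⁅(p.1 : L), (p.2 : L)⁆ = 0} ≤
      Nat.card {p : L × L // ⁅p.1, p.2⁆ = 0} :=
  Nat.card_le_card_of_injective (Subtype.map (Prod.map (↑) (↑)) fun _ h => h) <|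
    Subtype.map_injective _ <| Prod.map_injective.2 ⟨Subtype.val_injective, Subtype.val_injective⟩

variable [Finite L]

theorem card_mul_card_centralizer_le (z : L) :
    Nat.card K * Nat.card {y : L // ⁅z, y⁆ = 0} ≤
      Nat.card L * Nat.card {y : K // ⁅z, (y : L)⁆ = 0} := by
  have hK : Nat.card {y : K // ⁅z, (y : L)⁆ = 0} =
      Nat.card (lieCentralizer z ⊓ K : AddSubgroup L) :=
    Nat.card_congr <| (Equiv.subtypeSubtypeEquivSubtypeInter (· ∈ K) (⁅z, ·⁆ = 0)).trans <|
      Equiv.subtypeEquivRight fun y => by rw [AddSubgroup.mem_inf, mem_lieCentralizer, and_comm]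
  rw [hK, mul_comm]
  exact (lieCentralizer z).card_mul_card_le_card_mul_card_inf K

theorem card_mul_card_commute_pairs_le {S : Type*} [Finite S] (f : S → L) :
    Nat.card K * Nat.card {p : S × L // ⁅f p.1, p.2⁆ = 0} ≤
      Nat.card L * Nat.card {p : S × K // ⁅f p.1, (p.2 : L)⁆ = 0} := by
  have := Fintype.ofFinite S
  rw [Nat.card_congr (Equiv.subtypeProdEquivSigmaSubtype fun s (y : L) => ⁅f s, y⁆ = 0),
    Nat.card_congr (Equiv.subtypeProdEquivSigmaSubtype fun s (y : K) => ⁅f s, (y : L)⁆ = 0),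
    Nat.card_sigma, Nat.card_sigma, Finset.mul_sum, Finset.mul_sum]
  exact Finset.sum_le_sum fun s _ => card_mul_card_centralizer_le K (f s)

theorem sq_card_mul_card_commute_pairs_le :
    Nat.card K ^ 2 * Nat.card {p : L × L // ⁅p.1, p.2⁆ = 0} ≤
      Nat.card L ^ 2 * Nat.card {p : K × K // ⁅(p.1 : L), (p.2 : L)⁆ = 0} := by
  have hL : Nat.card K * Nat.card {p : L × L // ⁅p.1, p.2⁆ = 0} ≤
      Nat.card L * Nat.card {p : K × L // ⁅(p.1 : L), p.2⁆ = 0} :=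
    card_commute_pairs_swap K ▸ card_mul_card_commute_pairs_le K id
  have hK := card_mul_card_commute_pairs_le K ((↑) : K → L)
  calc Nat.card K ^ 2 * Nat.card {p : L × L // ⁅p.1, p.2⁆ = 0}
      ≤ Nat.card K * (Nat.card L * Nat.card {p : K × L // ⁅(p.1 : L), p.2⁆ = 0}) := by
        rw [sq, mul_assoc]; gcongr
    _ = Nat.card L * (Nat.card K * Nat.card {p : K × L // ⁅(p.1 : L), p.2⁆ = 0}) := by ring
    _ ≤ Nat.card L * (Nat.card L * Nat.card {p : K × K // ⁅(p.1 : L), (p.2 : L)⁆ = 0}) := by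
        gcongr
    _ = _ := by ring

end

theorem LieSubalgebra.card_commute_pairs_eq {F L : Type*} [CommRing F] [LieRing L]
    [LieAlgebra F L] (H : LieSubalgebra F L) :
    Nat.card {p : H × H // ⁅p.1, p.2⁆ = 0} =
      Nat.card {p : H.toSubmodule.toAddSubgroup × H.toSubmodule.toAddSubgroup //
        ⁅(p.1 : L), (p.2 : L)⁆ = 0} :=
  Nat.card_congr <| Equiv.subtypeEquivRight fun p => by
    rw [← LieSubalgebra.coe_bracket, ZeroMemClass.coe_eq_zero]

theorem commDeg_subalgebra_bounds_general
    (F : Type*) [Field F]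
    (L : Type*) [LieRing L] [LieAlgebra F L] [Finite L]
    (H : LieSubalgebra F L) :
    ((Nat.card H : ℚ) ^ 2 / (Nat.card L : ℚ) ^ 2) * commDeg H ≤ commDeg L ∧
      commDeg L ≤ commDeg H := by
  have hpairs := LieSubalgebra.card_commute_pairs_eq H
  have hH : 0 < (Nat.card H : ℚ) := by exact_mod_cast Nat.card_pos
  have hL : 0 < (Nat.card L : ℚ) := by exact_mod_cast Nat.card_pos
  unfold commDeg
  constructor
  · rw [div_mul_div_cancel₀' (by positivity), hpairs]
    gcongr
    exact_mod_cast card_commute_pairs_le H.toSubmodule.toAddSubgroup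
  · rw [div_le_div_iff₀ (by positivity) (by positivity), hpairs, mul_comm,
      mul_comm _ ((Nat.card L : ℚ) ^ 2)]
    exact_mod_cast sq_card_mul_card_commute_pairs_le H.toSubmodule.toAddSubgroup

/-- If `L` is a finite-dimensional Lie algebra over the finite field `F_q`
and `H` is a Lie subalgebra of `L`, then `(|H|²/|L|²) · d(H) ≤ d(L) ≤ d(H)`. -/
theorem commDeg_subalgebra_bounds
    (F : Type*) [Field F] [Fintype F]
    (L : Type*) [LieRing L] [LieAlgebra F L] [Finite L]
    (H : LieSubalgebra F L) :
    ((Nat.card H : ℚ) ^ 2 / (Nat.card L : ℚ) ^ 2) * commDeg H ≤ commDeg L ∧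
      commDeg L ≤ commDeg H :=
  commDeg_subalgebra_bounds_general F L H
end

section
/- Let L be a finite-dimensional Lie algebra over the finite field F_q and H a Lie subalgebra of L such that L = H + Z(L), where Z(L) is the center of L. Then d(L) = d(H). -/
/-! Pull the commuting pairs of `L` and of `H` back to `(H × Z(L))²`, along the surjective
additive maps `(h, z) ↦ h + z` and `(h, z) ↦ h` respectively. Central summands do not change
brackets, so both preimages are the set of pairs whose `H`-components commute. A surjective
homomorphism of finite groups has all fibres of the size of its kernel, so pulling back preserves
the proportion of elements a set occupies; hence `d(L)` and `d(H)` are both the proportion of this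
set. -/

namespace AddMonoidHom

variable {G G' : Type*} [AddGroup G] [AddGroup G']

theorem card_preimage_of_surjective (f : G →+ G') (hf : Function.Surjective f) (S : Set G') :
    Nat.card (f ⁻¹' S) = Nat.card f.ker * Nat.card S := by
  let e := QuotientAddGroup.quotientKerEquivOfSurjective f hf
  have hS : f ⁻¹' S = QuotientAddGroup.mk ⁻¹' (e ⁻¹' S) := rfl
  rw [hS, Nat.card_congr (QuotientAddGroup.preimageMkEquivAddSubgroupProdSet _ _), Nat.card_prod,
    Nat.card_preimage_of_injective e.injective (by simp [e.surjective.range_eq])]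

theorem card_preimage_div_card_of_surjective [Finite G] (f : G →+ G')
    (hf : Function.Surjective f) (S : Set G') :
    (Nat.card (f ⁻¹' S) : ℚ) / Nat.card G = Nat.card S / Nat.card G' := by
  have : Finite G' := Finite.of_surjective f hf
  have hG : Nat.card G = Nat.card f.ker * Nat.card G' := by
    rw [← Nat.card_univ, ← Set.preimage_univ (f := f), card_preimage_of_surjective f hf,
      Nat.card_univ]
  have hker : (Nat.card f.ker : ℚ) ≠ 0 := by exact_mod_cast Nat.card_pos.ne'
  have hG' : (Nat.card G' : ℚ) ≠ 0 := by exact_mod_cast Nat.card_pos.ne'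
  rw [card_preimage_of_surjective f hf, hG]
  push_cast
  field_simp

end AddMonoidHom

def commutingPairs (L : Type*) [LieRing L] : Set (L × L) := {p | ⁅p.1, p.2⁆ = 0}

theorem commDeg_eq_card_commutingPairs_div (L : Type*) [LieRing L] :
    commDeg L = Nat.card (commutingPairs L) / Nat.card (L × L) := by
  rw [commDeg, Nat.card_prod, Nat.cast_mul, sq]
  rfl

theorem lie_add_add_of_central {L : Type*} [LieRing L] (x y : L) {z z' : L}
    (hz : ∀ w : L, ⁅w, z⁆ = 0) (hz' : ∀ w : L, ⁅w, z'⁆ = 0) :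
    ⁅x + z, y + z'⁆ = ⁅x, y⁆ := by
  rw [add_lie, lie_add, lie_add, hz', hz', ← lie_skew z y, hz, neg_zero, add_zero, add_zero,
    add_zero]

theorem commDeg_eq_of_add_center_general
    (F : Type*) [Field F]
    (L : Type*) [LieRing L] [LieAlgebra F L] [Finite L]
    (H : LieSubalgebra F L)
    (hHZ : ∀ x : L, ∃ h ∈ H, ∃ z ∈ LieAlgebra.center F L, x = h + z) :
    commDeg L = commDeg H := by
  let Z := LieAlgebra.center F L
  let φ : H × Z →+ L := (AddSubgroupClass.subtype H).coprod (AddSubgroupClass.subtype Z)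
  have hφ : Function.Surjective φ := fun x ↦
    let ⟨h, hh, z, hz, hx⟩ := hHZ x
    ⟨(⟨h, hh⟩, ⟨z, hz⟩), hx.symm⟩
  let π : H × Z →+ H := AddMonoidHom.fst H Z
  have hπ : Function.Surjective π := Prod.fst_surjective
  have hpairs : φ.prodMap φ ⁻¹' commutingPairs L = π.prodMap π ⁻¹' commutingPairs H := by
    ext ⟨⟨h, z⟩, ⟨h', z'⟩⟩
    change ⁅(h : L) + z, (h' : L) + z'⁆ = 0 ↔ ⁅h, h'⁆ = 0
    rw [lie_add_add_of_central _ _ z.2 z'.2, ← LieSubalgebra.coe_bracket,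
      ZeroMemClass.coe_eq_zero]
  rw [commDeg_eq_card_commutingPairs_div, commDeg_eq_card_commutingPairs_div,
    ← AddMonoidHom.card_preimage_div_card_of_surjective (φ.prodMap φ) (hφ.prodMap hφ), hpairs,
    AddMonoidHom.card_preimage_div_card_of_surjective (π.prodMap π) (hπ.prodMap hπ)]

/-- If `L` is a finite-dimensional Lie algebra over the finite field `F_q`
and `H` is a Lie subalgebra of `L` with `L = H + Z(L)`, then `d(L) = d(H)`. -/
theorem commDeg_eq_of_add_center
    (F : Type*) [Field F] [Fintype F]
    (L : Type*) [LieRing L] [LieAlgebra F L] [Finite L]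
    (H : LieSubalgebra F L)
    (hHZ : ∀ x : L, ∃ h ∈ H, ∃ z ∈ LieAlgebra.center F L, x = h + z) :
    commDeg L = commDeg H :=
  commDeg_eq_of_add_center_general F L H hHZ
end

section
/- Let L be a finite-dimensional Lie algebra over the finite field F_q and N an ideal of L. Then d(L) ≤ d(L/N) · d(N). -/
open Finset

theorem AddMonoidHom.card_fiber_le_card_fiber_zero {G M : Type*} [AddGroup G] [Fintype G]
    [AddMonoid M] [DecidableEq M] (f : G →+ M) (x : M) :
    #{g | f g = x} ≤ #{g | f g = 0} := by
  by_cases hx : x ∈ Set.range f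
  · exact (AddMonoidHom.card_fiber_eq_of_mem_range f hx ⟨0, map_zero f⟩).le
  · rw [filter_false_of_mem fun g _ hg => hx ⟨g, hg⟩, card_empty]
    exact Nat.zero_le _

theorem Finset.card_filter_prod_eq_sum {α β : Type*} [Fintype α] [Fintype β] (r : α → β → Prop)
    [∀ a b, Decidable (r a b)] : #{p : α × β | r p.1 p.2} = ∑ a, #{b | r a b} := by
  simp only [card_filter, Fintype.sum_prod_type]

namespace LieIdeal

open scoped Classical

variable {R L : Type*} [CommRing R] [LieRing L] [LieAlgebra R L] [Fintype L] (N : LieIdeal R L)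

local notation "π" => LieSubmodule.Quotient.mk' N

theorem card_filter_mk_eq_and_map_eq_zero_le {M : Type*} [AddCommGroup M] (φ : L →+ M)
    (c : L ⧸ N) :
    #{y | π y = c ∧ φ y = 0} ≤ #{n : N | φ n = 0} := calc
  #{y | π y = c ∧ φ y = 0} = #{y | (π : L →ₗ[R] L ⧸ N).toAddMonoidHom.prod φ y = (c, 0)} := by
    simp [Prod.ext_iff]
  _ ≤ #{y | (π : L →ₗ[R] L ⧸ N).toAddMonoidHom.prod φ y = 0} :=
    AddMonoidHom.card_fiber_le_card_fiber_zero _ _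
  _ = #{n : N | φ n = 0} := by
    simp only [AddMonoidHom.prod_apply, Prod.mk_eq_zero, LinearMap.toAddMonoidHom_coe,
      LieModuleHom.coe_toLinearMap, LieSubmodule.Quotient.mk_eq_zero, ← Fintype.card_subtype]
    exact Fintype.card_congr (Equiv.subtypeSubtypeEquivSubtypeInter (· ∈ N) (φ · = 0)).symm

theorem card_commPairs_fiber_le (a b : L ⧸ N) :
    #{p : L × L | π p.1 = a ∧ π p.2 = b ∧ ⁅p.1, p.2⁆ = 0} ≤ #{p : N × N | ⁅p.1, p.2⁆ = 0} := calc
  _ = ∑ x, #{y | π x = a ∧ π y = b ∧ ⁅x, y⁆ = 0} := card_filter_prod_eq_sum _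
  _ ≤ ∑ x, #{n : N | π x = a ∧ ⁅x, (n : L)⁆ = 0} := sum_le_sum fun x _ => by
      by_cases hx : π x = a
      · simpa [hx] using card_filter_mk_eq_and_map_eq_zero_le N (.mk' (⁅x, ·⁆) (lie_add x)) b
      · simp only [hx, false_and, filter_false, card_empty, le_refl]
  _ = ∑ n : N, #{x | π x = a ∧ ⁅x, (n : L)⁆ = 0} :=
      sum_card_bipartiteAbove_eq_sum_card_bipartiteBelow _
  _ ≤ ∑ n : N, #{m : N | ⁅(m : L), (n : L)⁆ = 0} := sum_le_sum fun n _ =>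
      card_filter_mk_eq_and_map_eq_zero_le N (.mk' (⁅·, (n : L)⁆) fun y z => add_lie y z (n : L)) a
  _ = #{p : N × N | ⁅p.1, p.2⁆ = 0} := by
      simp only [card_filter, Fintype.sum_prod_type_right, Subtype.ext_iff,
        LieSubmodule.coe_bracket, LieIdeal.coe_bracket_of_module, ZeroMemClass.coe_zero]

theorem card_commPairs_le_mul :
    Nat.card {p : L × L // ⁅p.1, p.2⁆ = 0} ≤
      Nat.card {p : N × N // ⁅p.1, p.2⁆ = 0} *
        Nat.card {p : (L ⧸ N) × (L ⧸ N) // ⁅p.1, p.2⁆ = 0} := by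
  have : Fintype (L ⧸ N) := Submodule.Quotient.fintype N.toSubmodule
  simp only [Nat.card_eq_fintype_card, Fintype.card_subtype]
  refine card_le_mul_card_image_of_maps_to (f := Prod.map π π) (fun p hp => ?_) _ fun c _ => ?_
  · have hp : ⁅p.1, p.2⁆ = 0 := (mem_filter.1 hp).2
    simp [← LieSubmodule.Quotient.mk_bracket, hp]
  · rw [filter_filter]
    convert card_commPairs_fiber_le N c.1 c.2 using 2
    ext p
    simp only [mem_filter, mem_univ, true_and, Prod.ext_iff, Prod.map_fst, Prod.map_snd,
      LieSubmodule.Quotient.mk'_apply]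
    tauto

end LieIdeal

theorem commDeg_le_commDeg_quotient_mul_general
    (F : Type*) [Field F]
    (L : Type*) [LieRing L] [LieAlgebra F L] [Finite L]
    (N : LieIdeal F L) :
    commDeg L ≤ commDeg (L ⧸ N) * commDeg N := by
  have := Fintype.ofFinite L
  have : Finite (L ⧸ N) := Finite.of_surjective _ (LieSubmodule.Quotient.surjective_mk' N)
  have hN : 0 < Nat.card N := Nat.card_pos
  have hQ : 0 < Nat.card (L ⧸ N) := Nat.card_pos
  have hL : Nat.card L = Nat.card (L ⧸ N) * Nat.card N :=
    (N.toSubmodule.card_eq_card_quotient_mul_card).trans (mul_comm _ _)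
  rw [commDeg, commDeg, commDeg, div_mul_div_comm, hL, Nat.cast_mul, mul_pow,
    div_le_div_iff_of_pos_right (by positivity), mul_comm]
  exact_mod_cast N.card_commPairs_le_mul

/-- If `L` is a finite-dimensional Lie algebra over the finite field `F_q`
and `N` is an ideal of `L`, then `d(L) ≤ d(L/N) · d(N)`. -/
theorem commDeg_le_commDeg_quotient_mul
    (F : Type*) [Field F] [Fintype F]
    (L : Type*) [LieRing L] [LieAlgebra F L] [Finite L]
    (N : LieIdeal F L) :
    commDeg L ≤ commDeg (L ⧸ N) * commDeg N :=
  commDeg_le_commDeg_quotient_mul_general F L N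
end
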